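/- Let $t$ be a non-degenerate t-structure on a Krull–Schmidt triangulated category $\mathcal{D}$ whose heart $\heartsuit_t$ is finite-length, and suppose $\mathcal{D}$ has enough derived projectives with respect to $t$. Let $\silting$ be a full set of isomorphism representatives of the indecomposable derived projectives. Then $\mathcal{D}^{t\leq 0} = \silting^{\perp_{>0}}$ and $\mathcal{D}^{t\geq 0} = \silting^{\perp_{<0}}$; in particular $t$ is a silting t-structure with silting collection $\silting$. -/

import Mathlib

open CategoryTheory Limits Pretriangulated

namespace Paper

universe v u

variable {C : Type u} [Category.{v} C] [Preadditive C] [HasZeroObject C]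
  [HasShift C ℤ] [∀ n : ℤ, (shiftFunctor C n).Additive] [Pretriangulated C]

open CategoryTheory.Triangulated

/-- The right perpendicular of a class of objects. -/
def rPerp (T : Set C) : Set C := {Y | ∀ X ∈ T, ∀ f : X ⟶ Y, f = 0}

/-- The left perpendicular of a class of objects. -/
def lPerp (T : Set C) : Set C := {X | ∀ Y ∈ T, ∀ f : X ⟶ Y, f = 0}

/-- `S^{⊥_{>0}}`. -/
def perpGT (S : Set C) : Set C := {X | ∀ P ∈ S, ∀ m : ℤ, 0 < m → ∀ f : P ⟶ X⟦m⟧, f = 0}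

/-- `S^{⊥_{<0}}`. -/
def perpLT (S : Set C) : Set C := {X | ∀ P ∈ S, ∀ m : ℤ, m < 0 → ∀ f : P ⟶ X⟦m⟧, f = 0}

/-- The pair `(S^{⊥_{>0}}, S^{⊥_{<0}})` is the t-structure `t`. -/
def IsSiltingTStructureFor (S : Set C) (t : TStructure C) : Prop :=
  (∀ X : C, t.le 0 X ↔ X ∈ perpGT S) ∧ (∀ X : C, t.ge 0 X ↔ X ∈ perpLT S)

/-- `X` is a retract (direct summand) of `Y`. -/
def IsRetractOf (X Y : C) : Prop := ∃ (i : X ⟶ Y) (r : Y ⟶ X), i ≫ r = 𝟙 X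


/-- An indecomposable object: nonzero, and not a nontrivial biproduct. -/
def IndecObj {A : Type*} [Category A] [Limits.HasZeroMorphisms A]
    [HasBinaryBiproducts A] (X : A) : Prop :=
  ¬ IsZero X ∧ ∀ Y Z : A, Nonempty (X ≅ Y ⊞ Z) → IsZero Y ∨ IsZero Z

section Biprod
variable [HasFiniteBiproducts C]

/-- The Karoubi closure: direct summands of finite coproducts of objects of `S`. -/
def Kar (S : Set C) : Set C :=
  {X | ∃ (n : ℕ) (f : Fin n → C), (∀ i, f i ∈ S) ∧ IsRetractOf X (⨁ f)}

/-- A class of objects is Krull–Schmidt: every object is a finite biproduct of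
objects of the class with local endomorphism rings. -/
def KrullSchmidtOn (T : Set C) : Prop :=
  ∀ X ∈ T, ∃ (n : ℕ) (f : Fin n → C),
    (∀ i, f i ∈ T ∧ IsLocalRing (End (f i))) ∧ Nonempty (X ≅ ⨁ f)

/-- The category `C` is Krull–Schmidt. -/
def IsKrullSchmidt : Prop :=
  ∀ X : C, ∃ (n : ℕ) (f : Fin n → C),
    (∀ i, IsLocalRing (End (f i))) ∧ Nonempty (X ≅ ⨁ f)

/-- A silting collection: pairwise non-isomorphic indecomposables whose Karoubi
closure is Krull–Schmidt, such that the perpendicular pair is the t-structure `t`. -/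
structure IsSiltingCollection (S : Set C) (t : TStructure C) : Prop where
  indec : ∀ P ∈ S, IndecObj P
  pairwise_noniso : ∀ P ∈ S, ∀ Q ∈ S, P ≠ Q → IsEmpty (P ≅ Q)
  kar_ks : KrullSchmidtOn (Kar S)
  tstr : IsSiltingTStructureFor S t

end Biprod

/-- Derived projective objects with respect to a t-structure. -/
def IsDerivedProjective (t : TStructure C) (P : C) : Prop :=
  t.le 0 P ∧ ∀ (X : C), t.le 0 X → ∀ f : P ⟶ X⟦(1 : ℤ)⟧, f = 0

/-- The heart of a t-structure, as a class of objects. -/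
def heartSet (t : TStructure C) : Set C := {X | t.le 0 X ∧ t.ge 0 X}

/-- The heart of a t-structure, as a full subcategory. -/
abbrev Heart (t : TStructure C) := ObjectProperty.FullSubcategory (C := C) (heartSet t)

instance (t : TStructure C) : Category (Heart t) := ObjectProperty.FullSubcategory.category _

instance (P : C → Prop) : Preadditive (ObjectProperty.FullSubcategory P) where
  homGroup X Y := InducedCategory.homEquiv.addCommGroup
  add_comp _ _ _ f f' g := by ext; exact Preadditive.add_comp _ _ _ f.hom f'.hom g.hom
  comp_add _ _ _ f g g' := by ext; exact Preadditive.comp_add _ _ _ f.hom g.hom g'.hom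

/-- Truncation data for a t-structure: the truncation functors `t_{≤0}` (right adjoint
to the inclusion of `D^{t≤0}`), `t_{≥0}` (left adjoint to the inclusion of `D^{t≥0}`),
and the zeroth cohomology functor `H = t_{≤0} ∘ t_{≥0}`. -/
structure TruncationData (t : TStructure C) where
  /-- the zeroth cohomology functor -/
  H : C ⥤ C
  H_heart : ∀ X : C, H.obj X ∈ heartSet t
  τle : C ⥤ C
  τleCounit : τle ⟶ 𝟭 C
  τle_mem : ∀ X : C, t.le 0 (τle.obj X)
  τle_fac : ∀ (X Z : C), t.le 0 Z → ∀ f : Z ⟶ X,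
    ∃! g : Z ⟶ τle.obj X, g ≫ τleCounit.app X = f
  τge : C ⥤ C
  τgeUnit : 𝟭 C ⟶ τge
  τge_mem : ∀ X : C, t.ge 0 (τge.obj X)
  τge_fac : ∀ (X Z : C), t.ge 0 Z → ∀ f : X ⟶ Z,
    ∃! g : τge.obj X ⟶ Z, τgeUnit.app X ≫ g = f
  H_eq : H = τge ⋙ τle

/-- The zeroth cohomology functor, valued in the heart. -/
def TruncationData.Hh {t : TStructure C} (TD : TruncationData t) : C ⥤ Heart t :=
  ObjectProperty.lift _ TD.H TD.H_heart

/-- A projective cover: an essential epimorphism from a projective object. -/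
def IsProjectiveCover {A : Type*} [Category A] {P X : A} (π : P ⟶ X) : Prop :=
  Projective P ∧ Epi π ∧ ∀ (R : A) (g : R ⟶ P), Epi (g ≫ π) → Epi g

/-- A derived projective cover of `X`. -/
def IsDerivedProjectiveCover {t : TStructure C} (TD : TruncationData t)
    {P X : C} (π : P ⟶ X) : Prop :=
  IsDerivedProjective t P ∧ IsProjectiveCover (TD.Hh.map π)

/-- A t-structure is non-degenerate. -/
def NonDegenerate (t : TStructure C) : Prop :=
  (∀ X : C, (∀ n : ℤ, t.le n X) → IsZero X) ∧ (∀ X : C, (∀ n : ℤ, t.ge n X) → IsZero X)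

/-- An object of a category has finite length: bounded chains of subobjects. -/
def FiniteLengthObj {A : Type*} [Category A] (X : A) : Prop :=
  ∃ n : ℕ, ∀ s : Fin (n + 1) → Subobject X, ¬ StrictMono s

/-- `D` has derived projectives: every projective of the heart is `H⁰` of a
derived projective. -/
def HasDerivedProjectives {t : TStructure C} (TD : TruncationData t) : Prop :=
  ∀ Q : Heart t, Projective Q → ∃ P : C, IsDerivedProjective t P ∧ Nonempty (TD.Hh.obj P ≅ Q)

/-- `D` has enough derived projectives. -/
def HasEnoughDerivedProjectives {t : TStructure C} (TD : TruncationData t) : Prop :=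
  EnoughProjectives (Heart t) ∧ HasDerivedProjectives TD

/-- The extension closure of a class of objects. -/
inductive ExtClos (T : Set C) : C → Prop
  | of {X : C} : X ∈ T → ExtClos T X
  | zero {X : C} : IsZero X → ExtClos T X
  | ext {A E B : C} (f : A ⟶ E) (g : E ⟶ B) (h : B ⟶ A⟦(1 : ℤ)⟧) :
      Triangle.mk f g h ∈ (distTriang C) → ExtClos T A → ExtClos T B → ExtClos T E

/-- The Karoubi (retract) closure of a class of objects. -/
def KarClos (T : Set C) : Set C := {X | ∃ Y ∈ T, IsRetractOf X Y}

/-- The triangulated subcategory generated by a class of objects. -/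
inductive TriaClos (T : Set C) : C → Prop
  | of {X : C} : X ∈ T → TriaClos T X
  | zero {X : C} : IsZero X → TriaClos T X
  | shift {X : C} (n : ℤ) : TriaClos T X → TriaClos T (X⟦n⟧)
  | ext {A E B : C} (f : A ⟶ E) (g : E ⟶ B) (h : B ⟶ A⟦(1 : ℤ)⟧) :
      Triangle.mk f g h ∈ (distTriang C) → TriaClos T A → TriaClos T B → TriaClos T E

/-- The thick subcategory generated by a class of objects. -/
inductive ThickClos (T : Set C) : C → Prop
  | of {X : C} : X ∈ T → ThickClos T X
  | zero {X : C} : IsZero X → ThickClos T X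
  | shift {X : C} (n : ℤ) : ThickClos T X → ThickClos T (X⟦n⟧)
  | ext {A E B : C} (f : A ⟶ E) (g : E ⟶ B) (h : B ⟶ A⟦(1 : ℤ)⟧) :
      Triangle.mk f g h ∈ (distTriang C) → ThickClos T A → ThickClos T B → ThickClos T E
  | retract {X Y : C} : IsRetractOf X Y → ThickClos T Y → ThickClos T X

/-- A thick subcategory, as a class of objects. -/
structure IsThickSet (T : Set C) : Prop where
  zero : ∀ X : C, IsZero X → X ∈ T
  shift : ∀ X ∈ T, ∀ n : ℤ, X⟦n⟧ ∈ T
  ext : ∀ (A E B : C) (f : A ⟶ E) (g : E ⟶ B) (h : B ⟶ A⟦(1 : ℤ)⟧),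
    Triangle.mk f g h ∈ (distTriang C) → A ∈ T → B ∈ T → E ∈ T
  retract : ∀ X Y : C, IsRetractOf X Y → Y ∈ T → X ∈ T

/-- A weight structure on the subcategory of `C` given by the class `CC`. -/
structure WeightStructureOn (CC : Set C) where
  le : Set C
  ge : Set C
  le_sub : le ⊆ CC
  ge_sub : ge ⊆ CC
  le_iso : ∀ X Y : C, (X ≅ Y) → X ∈ le → Y ∈ le
  ge_iso : ∀ X Y : C, (X ≅ Y) → X ∈ ge → Y ∈ ge
  le_retract : ∀ X Y : C, IsRetractOf X Y → Y ∈ le → X ∈ le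
  ge_retract : ∀ X Y : C, IsRetractOf X Y → Y ∈ ge → X ∈ ge
  le_shift : ∀ X ∈ le, X⟦(1 : ℤ)⟧ ∈ le
  ge_shift : ∀ X ∈ ge, X⟦(-1 : ℤ)⟧ ∈ ge
  orth : ∀ X : C, X⟦(1 : ℤ)⟧ ∈ ge → ∀ Y ∈ le, ∀ f : X ⟶ Y, f = 0
  decomp : ∀ X ∈ CC, ∃ (A B : C) (f : A ⟶ X) (g : X ⟶ B) (h : B ⟶ A⟦(1 : ℤ)⟧),
    Triangle.mk f g h ∈ (distTriang C) ∧ A⟦(1 : ℤ)⟧ ∈ ge ∧ B ∈ le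

namespace WeightStructureOn

variable {CC : Set C} (w : WeightStructureOn CC)

/-- `C_{w>0}`. -/
def gt : Set C := {X | X⟦(1 : ℤ)⟧ ∈ w.ge}

/-- `C_{w<0}`. -/
def lt : Set C := {X | X⟦(-1 : ℤ)⟧ ∈ w.le}

end WeightStructureOn


/-!
For a derived projective `P`, a vanishing `Hom(P, X) = 0` forces `Hom(H⁰P, H⁰X) = 0`. If `S` kills
`X`, then so does every derived projective (decompose it into indecomposables, each isomorphic to a
member of `S`), and since every projective of the heart is some `H⁰P`, the object `H⁰X` admits no
nonzero map from a projective and vanishes. So if `Y ∈ D^{≥n}` and `Hom(S, Y[m]) = 0` for `m ≥ n`,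
induction gives `Y ∈ D^{≥n+k}` for all `k`, and `Y = 0` by non-degeneracy; dually for `D^{≤n}`.
Applied to the truncation triangle of `X ∈ S^{⊥>0}` (resp. `X ∈ S^{⊥<0}`) this kills its `D^{≥1}`
(resp. `D^{≤-1}`) part.
-/

theorem _root_.IsIdempotentElem.eq_zero_or_eq_one_of_isLocalRing {R : Type*} [Ring R]
    [IsLocalRing R] {e : R} (he : IsIdempotentElem e) : e = 0 ∨ e = 1 := by
  rcases IsLocalRing.isUnit_or_isUnit_of_add_one (add_sub_cancel e 1) with hu | hu
  · exact Or.inr ((IsIdempotentElem.iff_eq_one_of_isUnit hu).1 he)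
  · exact Or.inl (by simpa using (IsIdempotentElem.iff_eq_one_of_isUnit hu).1 he.one_sub)

lemma indecObj_of_isLocalRing {A : Type*} [Category A] [Preadditive A] [HasBinaryBiproducts A]
    {X : A} (hX : IsLocalRing (End X)) : IndecObj X := by
  refine ⟨fun hz => one_ne_zero (α := End X) (hz.eq_of_src _ _), fun Y Z ⟨φ⟩ => ?_⟩
  have isZero_of_summand : ∀ {W : A} (p : Y ⊞ Z ⟶ W) (i : W ⟶ Y ⊞ Z), i ≫ p = 𝟙 W →
      φ.hom ≫ p ≫ i ≫ φ.inv = 0 → IsZero W := fun p i hip h0 => by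
    rw [IsZero.iff_id_eq_zero, ← hip]
    simpa [reassoc_of% hip] using congrArg (fun m => i ≫ φ.inv ≫ m ≫ φ.hom ≫ p) h0
  let e : End X := φ.hom ≫ biprod.fst ≫ biprod.inl ≫ φ.inv
  have he : IsIdempotentElem e := by simp [IsIdempotentElem, e, End.mul_def]
  let e' : End X := φ.hom ≫ biprod.snd ≫ biprod.inr ≫ φ.inv
  have htotal : e + e' = 1 := by
    change φ.hom ≫ biprod.fst ≫ biprod.inl ≫ φ.inv +
      φ.hom ≫ biprod.snd ≫ biprod.inr ≫ φ.inv = 𝟙 X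
    rw [← Preadditive.comp_add, ← Category.assoc biprod.fst, ← Category.assoc biprod.snd,
      ← Preadditive.add_comp, biprod.total, Category.id_comp, φ.hom_inv_id]
  rcases he.eq_zero_or_eq_one_of_isLocalRing with h | h
  · exact Or.inl (isZero_of_summand biprod.fst biprod.inl (by simp) h)
  · exact Or.inr (isZero_of_summand biprod.snd biprod.inr (by simp)
      (show e' = 0 by rw [eq_sub_of_add_eq' htotal, h, sub_self]))

variable (t : TStructure C)

lemma le_of_retract {X Y : C} (h : Retract X Y) {n : ℤ} (hY : t.le n Y) : t.le n X := by
  rw [t.le_iff_isLE, t.isLE_iff_orthogonal n (n + 1) rfl]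
  intro W f _
  have : t.IsLE Y n := ⟨hY⟩
  rw [← Category.id_comp f, ← h.retract, Category.assoc, t.zero (h.r ≫ f) n (n + 1),
    comp_zero]

variable {t}

lemma IsDerivedProjective.of_retract {P Q : C} (h : Retract P Q) (hQ : IsDerivedProjective t Q) :
    IsDerivedProjective t P :=
  ⟨le_of_retract t h hQ.1, fun X hX f => by
    rw [← Category.id_comp f, ← h.retract, Category.assoc, hQ.2 X hX (h.r ≫ f), comp_zero]⟩

lemma IsDerivedProjective.hom_shift_eq_zero {P X : C} (hP : IsDerivedProjective t P)
    (hX : t.le 0 X) {m : ℤ} (hm : 0 < m) (f : P ⟶ X⟦m⟧) : f = 0 := by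
  let e : X⟦m⟧ ≅ (X⟦m - 1⟧)⟦(1 : ℤ)⟧ := (shiftFunctorAdd' C (m - 1) 1 m (by lia)).app X
  have hX' : t.le 0 (X⟦m - 1⟧) :=
    t.le_monotone (by lia : 1 - m ≤ 0) _ (t.le_shift 0 (m - 1) (1 - m) (by lia) X hX)
  rw [← cancel_mono e.hom, hP.2 _ hX' (f ≫ e.hom), zero_comp]

lemma mem_perpGT_of_le_zero {S : Set C} (hS : ∀ P ∈ S, IsDerivedProjective t P) {X : C}
    (hX : t.le 0 X) : X ∈ perpGT S :=
  fun P hP _ hm f => (hS P hP).hom_shift_eq_zero hX hm f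

lemma mem_perpLT_of_ge_zero {S : Set C} (hS : ∀ P ∈ S, IsDerivedProjective t P) {X : C}
    (hX : t.ge 0 X) : X ∈ perpLT S := fun P hP m hm f => by
  have : t.IsLE P 0 := ⟨(hS P hP).1⟩
  have : t.IsGE X 0 := ⟨hX⟩
  have := t.isGE_shift X 0 m (-m)
  have := t.isGE_of_ge (X⟦m⟧) 1 (-m)
  exact t.zero f 0 1

lemma hom_eq_zero_of_isDerivedProjective [HasFiniteBiproducts C] (hKS : IsKrullSchmidt (C := C))
    {S : Set C} (hS : ∀ P : C, IsDerivedProjective t P → IndecObj P → ∃ Q ∈ S, Nonempty (P ≅ Q))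
    {W : C} (hW : ∀ P ∈ S, ∀ f : P ⟶ W, f = 0) {P : C} (hP : IsDerivedProjective t P)
    (f : P ⟶ W) : f = 0 := by
  obtain ⟨n, Q, hQ, ⟨φ⟩⟩ := hKS P
  rw [← cancel_epi φ.inv, comp_zero]
  refine biproduct.hom_ext' _ _ fun j => ?_
  let hj : Retract (Q j) P := ⟨biproduct.ι Q j ≫ φ.inv, φ.hom ≫ biproduct.π Q j, by simp⟩
  obtain ⟨Q', hQ', ⟨ε⟩⟩ := hS (Q j) (hP.of_retract hj) (indecObj_of_isLocalRing (hQ j))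
  rw [comp_zero, ← cancel_epi ε.inv, comp_zero]
  exact hW Q' hQ' _

-- The generic instance above is not found for `heartSet t`, a `Set C` rather than a predicate.
instance : Preadditive (Heart t) :=
  inferInstanceAs (Preadditive (ObjectProperty.FullSubcategory fun X : C => X ∈ heartSet t))

namespace TruncationData

variable (TD : TruncationData t)

lemma τge_hom_ext {X Z : C} (hZ : t.ge 0 Z) {g₁ g₂ : TD.τge.obj X ⟶ Z}
    (h : TD.τgeUnit.app X ≫ g₁ = TD.τgeUnit.app X ≫ g₂) : g₁ = g₂ :=
  (TD.τge_fac X Z hZ _).unique h rfl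

lemma τle_hom_ext {X Z : C} (hZ : t.le 0 Z) {g₁ g₂ : Z ⟶ TD.τle.obj X}
    (h : g₁ ≫ TD.τleCounit.app X = g₂ ≫ TD.τleCounit.app X) : g₁ = g₂ :=
  (TD.τle_fac X Z hZ _).unique h rfl

lemma isIso_τgeUnit_app {X : C} (hX : t.ge 0 X) : IsIso (TD.τgeUnit.app X) := by
  obtain ⟨g, hg, -⟩ := TD.τge_fac X X hX (𝟙 X)
  exact ⟨g, hg, TD.τge_hom_ext (TD.τge_mem X) (by simp [reassoc_of% hg])⟩

lemma isIso_τleCounit_app {X : C} (hX : t.le 0 X) : IsIso (TD.τleCounit.app X) := by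
  obtain ⟨g, hg, -⟩ := TD.τle_fac X X hX (𝟙 X)
  exact ⟨g, TD.τle_hom_ext (TD.τle_mem X) (by simp [hg]), hg⟩

lemma τge_obj_le_zero {X : C} (hX : t.le 0 X) : t.le 0 (TD.τge.obj X) := by
  rw [t.le_iff_isLE, t.isLE_iff_orthogonal 0 1 rfl]
  intro W f _
  have := t.isGE_of_ge W 0 1
  refine TD.τge_hom_ext (t.ge_of_isGE W 0) ?_
  rw [comp_zero]
  exact t.zero' _ hX (t.ge_of_isGE W 1)

lemma ge_one_of_isZero_H_obj {X : C} (hX : t.ge 0 X) (hH : IsZero (TD.H.obj X)) : t.ge 1 X := by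
  rw [TD.H_eq] at hH
  have := TD.isIso_τgeUnit_app hX
  have hτ : IsZero (TD.τle.obj X) := hH.of_iso (TD.τle.mapIso (asIso (TD.τgeUnit.app X)))
  rw [t.ge_iff_isGE, t.isGE_iff_orthogonal 0 1 rfl]
  intro Z f _
  obtain ⟨g, rfl, -⟩ := TD.τle_fac X Z (t.le_of_isLE Z 0) f
  rw [hτ.eq_of_tgt g 0, zero_comp]

lemma le_neg_one_of_isZero_H_obj {X : C} (hX : t.le 0 X) (hH : IsZero (TD.H.obj X)) :
    t.le (-1) X := by
  rw [TD.H_eq] at hH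
  have := TD.isIso_τleCounit_app (TD.τge_obj_le_zero hX)
  have hτ : IsZero (TD.τge.obj X) := hH.of_iso (asIso (TD.τleCounit.app _)).symm
  rw [t.le_iff_isLE, t.isLE_iff_orthogonal (-1) 0 (by lia)]
  intro Z f _
  obtain ⟨g, rfl, -⟩ := TD.τge_fac X Z (t.ge_of_isGE Z 0) f
  rw [hτ.eq_of_src g 0, comp_zero]

lemma exists_lift_τgeUnit {P : C} (hP : IsDerivedProjective t P) (X : C)
    (v : P ⟶ TD.τge.obj X) : ∃ k : P ⟶ X, k ≫ TD.τgeUnit.app X = v := by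
  obtain ⟨A, B, hA, hB, f, g, h, hT⟩ := t.exists_triangle X (-1) 0 (by lia)
  have : t.IsLE A (-1) := ⟨hA⟩
  have : t.IsGE (TD.τge.obj X) 0 := ⟨TD.τge_mem X⟩
  -- `TD.τge.obj X` is a retract of the third vertex `B`, along which `P` lifts.
  obtain ⟨φ, hφ, -⟩ := TD.τge_fac X B hB g
  obtain ⟨ψ, hψ⟩ : ∃ ψ : B ⟶ TD.τge.obj X, TD.τgeUnit.app X = g ≫ ψ :=
    Triangle.yoneda_exact₂ _ hT (TD.τgeUnit.app X)
      (t.zero_of_isLE_of_isGE _ (-1) 0 (by lia) ‹t.IsLE A (-1)› inferInstance)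
  have hφψ : φ ≫ ψ = 𝟙 _ :=
    TD.τge_hom_ext (TD.τge_mem X) (by rw [reassoc_of% hφ, Category.comp_id, hψ])
  obtain ⟨k, hk⟩ : ∃ k : P ⟶ X, v ≫ φ = k ≫ g :=
    Triangle.coyoneda_exact₃ _ hT (v ≫ φ) (hP.2 _ (t.le_monotone (by lia) _ hA) _)
  refine ⟨k, ?_⟩
  rw [hψ, ← Category.assoc, ← hk, Category.assoc, hφψ, Category.comp_id]

lemma hom_H_obj_eq_zero {P X : C} (hP : IsDerivedProjective t P) (hPX : ∀ f : P ⟶ X, f = 0)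
    (v : P ⟶ TD.H.obj X) : v = 0 := by
  revert v
  rw [TD.H_eq]
  intro v
  obtain ⟨k, hk⟩ := TD.exists_lift_τgeUnit hP X (v ≫ TD.τleCounit.app _)
  rw [hPX k, zero_comp] at hk
  exact TD.τle_hom_ext hP.1 (by rw [← hk, zero_comp])

lemma H_map_eq_zero {P X : C} (hP : IsDerivedProjective t P) (hPX : ∀ f : P ⟶ X, f = 0)
    (u : TD.H.obj P ⟶ TD.H.obj X) : u = 0 := by
  have hHX : t.ge 0 (TD.H.obj X) := (TD.H_heart X).2
  have hv := TD.hom_H_obj_eq_zero hP hPX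
  revert u
  rw [TD.H_eq] at hHX hv ⊢
  intro u
  have := TD.isIso_τleCounit_app (TD.τge_obj_le_zero hP.1)
  -- `P → τ≥0 P ≅ H⁰P` is the universal map to `D^{≥0}`.
  rw [← cancel_epi (inv (TD.τleCounit.app _)), comp_zero]
  exact TD.τge_hom_ext hHX (by rw [hv (TD.τgeUnit.app P ≫ _ ≫ u), comp_zero])

lemma isZero_H_obj (hED : HasEnoughDerivedProjectives TD) {X : C}
    (hX : ∀ P : C, IsDerivedProjective t P → ∀ f : P ⟶ X, f = 0) : IsZero (TD.H.obj X) := by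
  obtain ⟨π⟩ := hED.1.presentation (TD.Hh.obj X)
  obtain ⟨P, hP, ⟨ε⟩⟩ := hED.2 π.p π.projective
  have hzero : ε.hom ≫ π.f = 0 := by
    ext
    exact TD.H_map_eq_zero hP (hX P hP) _
  have := π.epi
  have hHX := IsZero.of_epi_eq_zero _ hzero
  rw [IsZero.iff_id_eq_zero] at hHX ⊢
  exact congrArg (·.hom) hHX

end TruncationData

section Detection

variable {TD : TruncationData t} {S : Set C}
  (hdet : ∀ W : C, (∀ P ∈ S, ∀ f : P ⟶ W, f = 0) → IsZero (TD.H.obj W))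
include hdet

lemma ge_add_one_of_hom_shift_eq_zero {Y : C} {n : ℤ} (hY : t.ge n Y)
    (h : ∀ P ∈ S, ∀ f : P ⟶ Y⟦n⟧, f = 0) : t.ge (n + 1) Y := by
  have h1 := TD.ge_one_of_isZero_H_obj (t.ge_shift n n 0 (by lia) Y hY) (hdet _ h)
  simp only [t.ge_iff_isGE] at h1 ⊢
  exact (t.isGE_shift_iff Y (n + 1) n 1).1 h1

lemma le_sub_one_of_hom_shift_eq_zero {Y : C} {n : ℤ} (hY : t.le n Y)
    (h : ∀ P ∈ S, ∀ f : P ⟶ Y⟦n⟧, f = 0) : t.le (n - 1) Y := by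
  have h1 := TD.le_neg_one_of_isZero_H_obj (t.le_shift n n 0 (by lia) Y hY) (hdet _ h)
  simp only [t.le_iff_isLE] at h1 ⊢
  exact (t.isLE_shift_iff Y (n - 1) n (-1)).1 h1

lemma isZero_of_ge_of_hom_shift_eq_zero (hnd : NonDegenerate t) {Y : C} {n₀ : ℤ}
    (hY : t.ge n₀ Y) (h : ∀ m, n₀ ≤ m → ∀ P ∈ S, ∀ f : P ⟶ Y⟦m⟧, f = 0) : IsZero Y := by
  have hk : ∀ k : ℕ, t.ge (n₀ + k) Y := fun k => by
    induction k with
    | zero => simpa using hY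
    | succ k ih =>
      rw [Nat.cast_succ, ← add_assoc]
      exact ge_add_one_of_hom_shift_eq_zero hdet ih (h _ (by lia))
  exact hnd.2 Y fun n => t.ge_antitone (by lia : n ≤ n₀ + (n - n₀).toNat) _ (hk _)

lemma isZero_of_le_of_hom_shift_eq_zero (hnd : NonDegenerate t) {Y : C} {n₀ : ℤ}
    (hY : t.le n₀ Y) (h : ∀ m, m ≤ n₀ → ∀ P ∈ S, ∀ f : P ⟶ Y⟦m⟧, f = 0) : IsZero Y := by
  have hk : ∀ k : ℕ, t.le (n₀ - k) Y := fun k => by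
    induction k with
    | zero => simpa using hY
    | succ k ih =>
      rw [Nat.cast_succ, ← sub_sub]
      exact le_sub_one_of_hom_shift_eq_zero hdet ih (h _ (by lia))
  exact hnd.1 Y fun n => t.le_monotone (by lia : n₀ - (n₀ - n).toNat ≤ n) _ (hk _)

variable (hS : ∀ P ∈ S, IsDerivedProjective t P) (hnd : NonDegenerate t)
include hS hnd

lemma le_zero_of_mem_perpGT {X : C} (hX : X ∈ perpGT S) : t.le 0 X := by
  obtain ⟨A, B, hA, hB, f, g, h, hT⟩ := t.exists_triangle_zero_one X
  suffices hB0 : IsZero B by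
    have : IsIso f := (Triangle.isZero₃_iff_isIso₁ _ hT).1 hB0
    exact (t.le 0).prop_of_iso (asIso f) hA
  refine isZero_of_ge_of_hom_shift_eq_zero hdet hnd hB fun m hm P hP v => ?_
  have hTm := Triangle.shift_distinguished _ hT m
  have hAm : t.le 0 (A⟦m⟧) :=
    t.le_monotone (by lia : -m ≤ 0) _ (t.le_shift 0 m (-m) (by lia) A hA)
  obtain ⟨k, rfl⟩ : ∃ k : P ⟶ X⟦m⟧, v = k ≫ _ :=
    Triangle.coyoneda_exact₃ _ hTm v ((hS P hP).2 _ hAm _)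
  rw [hX P hP m (by lia) k]
  exact zero_comp

lemma ge_zero_of_mem_perpLT {X : C} (hX : X ∈ perpLT S) : t.ge 0 X := by
  obtain ⟨A, B, hA, hB, f, g, h, hT⟩ := t.exists_triangle X (-1) 0 (by lia)
  suffices hA0 : IsZero A by
    have : IsIso g := (Triangle.isZero₁_iff_isIso₂ _ hT).1 hA0
    exact (t.ge 0).prop_of_iso (asIso g).symm hB
  refine isZero_of_le_of_hom_shift_eq_zero hdet hnd hA fun m hm P hP v => ?_
  have hTm := inv_rot_of_distTriang _ (Triangle.shift_distinguished _ hT m)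
  have : t.IsLE P 0 := ⟨(hS P hP).1⟩
  have : t.IsGE B 0 := ⟨hB⟩
  have := t.isGE_shift B 0 m (-m)
  have := t.isGE_shift (B⟦m⟧) (-m) (-1) (1 - m)
  have := t.isGE_of_ge ((B⟦m⟧)⟦(-1 : ℤ)⟧) 1 (1 - m)
  obtain ⟨k, rfl⟩ : ∃ k : P ⟶ (B⟦m⟧)⟦(-1 : ℤ)⟧, v = k ≫ _ :=
    Triangle.coyoneda_exact₂ _ hTm v (hX P hP m (by lia) _)
  rw [t.zero k 0 1]
  exact zero_comp

end Detection

theorem enough_derivedProjectives_silting_general [HasFiniteBiproducts C]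
    (hKS : IsKrullSchmidt (C := C)) (t : TStructure C) (TD : TruncationData t)
    (hnd : NonDegenerate t)
    (hED : HasEnoughDerivedProjectives TD)
    (S : Set C)
    (hS1 : ∀ P ∈ S, IsDerivedProjective t P ∧ IndecObj P)
    (hS3 : ∀ P : C, IsDerivedProjective t P → IndecObj P → ∃ Q ∈ S, Nonempty (P ≅ Q)) :
    (∀ X : C, t.le 0 X ↔ X ∈ perpGT S) ∧ (∀ X : C, t.ge 0 X ↔ X ∈ perpLT S) := by
  have hS : ∀ P ∈ S, IsDerivedProjective t P := fun P hP => (hS1 P hP).1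
  have hdet : ∀ W : C, (∀ P ∈ S, ∀ f : P ⟶ W, f = 0) → IsZero (TD.H.obj W) := fun _ hW =>
    TD.isZero_H_obj hED fun _ hP => hom_eq_zero_of_isDerivedProjective hKS hS3 hW hP
  exact ⟨fun X => ⟨mem_perpGT_of_le_zero hS, le_zero_of_mem_perpGT hdet hS hnd⟩,
    fun X => ⟨mem_perpLT_of_ge_zero hS, ge_zero_of_mem_perpLT hdet hS hnd⟩⟩

/-- if a non-degenerate t-structure with finite-length heart has enough
derived projectives, then it is the silting t-structure of the collection of
indecomposable derived projectives. -/
theorem enough_derivedProjectives_silting [HasFiniteBiproducts C]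
    (hKS : IsKrullSchmidt (C := C)) (t : TStructure C) (TD : TruncationData t)
    (hnd : NonDegenerate t)
    (hfl : ∀ X : Heart t, FiniteLengthObj X)
    (hED : HasEnoughDerivedProjectives TD)
    (S : Set C)
    (hS1 : ∀ P ∈ S, IsDerivedProjective t P ∧ IndecObj P)
    (hS2 : ∀ P ∈ S, ∀ Q ∈ S, P ≠ Q → IsEmpty (P ≅ Q))
    (hS3 : ∀ P : C, IsDerivedProjective t P → IndecObj P → ∃ Q ∈ S, Nonempty (P ≅ Q)) :
    (∀ X : C, t.le 0 X ↔ X ∈ perpGT S) ∧ (∀ X : C, t.ge 0 X ↔ X ∈ perpLT S) :=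
  enough_derivedProjectives_silting_general hKS t TD hnd hED S hS1 hS3

end Paper
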